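/- Let n ≥ 1 and let p_1,…,p_n and q_1,…,q_n be natural numbers. Let G⁻ be the group with presentation ⟨b_1,…,b_n, t | b_j^{2} = 1 for 1 ≤ j ≤ n, b_i^{2^{p_i}} = b_{i+1}^{2^{q_i}} for 1 ≤ i ≤ n−1, t^{−1} b_n^{2^{p_n}} t = b_1^{−2^{q_n}}⟩. Then the abelianization of G⁻ is isomorphic to ℤ if and only if exactly one of the two sums p_1 + ⋯ + p_n and q_1 + ⋯ + q_n equals 0. -/

import Mathlib

/-- The relators of the group `G⁻ = ⟨b_1,…,b_n, t | b_j² = 1 (1 ≤ j ≤ n),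
b_i^{2^{p_i}} = b_{i+1}^{2^{q_i}} (1 ≤ i ≤ n−1), t⁻¹ b_n^{2^{p_n}} t = b_1^{−2^{q_n}}⟩`,
where `some i` is `b_{i+1}` and `none` is `t`. -/
def echinusNegRels (n : ℕ) (hn : 0 < n) (p q : Fin n → ℕ) :
    Set (FreeGroup (Option (Fin n))) :=
  {x | ∃ j : Fin n, x = FreeGroup.of (some j) ^ 2} ∪
  {x | ∃ i j : Fin n, (i : ℕ) + 1 = (j : ℕ) ∧
      x = FreeGroup.of (some i) ^ 2 ^ p i * (FreeGroup.of (some j) ^ 2 ^ q i)⁻¹} ∪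
  {(FreeGroup.of none)⁻¹ *
      FreeGroup.of (some ⟨n - 1, Nat.sub_lt hn Nat.one_pos⟩) ^
        2 ^ p ⟨n - 1, Nat.sub_lt hn Nat.one_pos⟩ *
      FreeGroup.of none *
      (FreeGroup.of (some ⟨0, hn⟩) ^ (-((2 : ℤ) ^ q ⟨n - 1, Nat.sub_lt hn Nat.one_pos⟩)))⁻¹}

/-!
Since every `b_i` is an involution, in the abelianization the relator containing `t` loses both
`t` and its sign, and the relation for the edge `i → i + 1` of the cycle says: `b_i = b_{i+1}` if
`p_i = q_i = 0`, `b_i = 1` if only `p_i = 0`, `b_{i+1} = 1` if only `q_i = 0`, and nothing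
otherwise. The abelianization is `ℤ` (generated by `t`) exactly when all `b_i` die in it, since a
surviving `b_i` has order two.

If all `p_i` vanish but `q_j` does not, then `b_j = 1` and triviality propagates backwards around
the cycle; symmetrically forwards. Otherwise the relations have a nonzero solution in `ℤ/2`:
the constant one if all `p_i, q_i` vanish, and else the indicator of the vertices on runs of
edges with `p = q = 0` that are entered through an edge with `q ≠ 0` and left through one with
`p ≠ 0`. Such a run exists: otherwise the vertices reached from an edge with `q ≠ 0` along edges
with `p = q = 0` would be closed under successor, hence include the tail of an edge with `p ≠ 0`.
-/

open Relation

open scoped Fin.NatCast in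
theorem Fin.forall_of_imp_add_one {n : ℕ} {S : Fin (n + 1) → Prop} {j : Fin (n + 1)} (hj : S j)
    (h : ∀ i, S i → S (i + 1)) (i : Fin (n + 1)) : S i := by
  have hadd : ∀ k : ℕ, S (j + (k : Fin (n + 1))) := fun k => by
    induction k with
    | zero => simpa using hj
    | succ k ih => simpa [add_assoc] using h _ ih
  simpa using hadd (i - j).val

theorem Fin.forall_of_add_one_imp {n : ℕ} {S : Fin (n + 1) → Prop} {j : Fin (n + 1)} (hj : S j)
    (h : ∀ i, S (i + 1) → S i) (i : Fin (n + 1)) : S i := by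
  simpa using Fin.forall_of_imp_add_one (S := fun i => S (-i)) (j := -j) (by simpa using hj)
    (fun i hi => h _ (by simpa [neg_add] using hi)) (-i)

theorem Fin.eq_add_one_of_val_add_one_eq {n : ℕ} {i j : Fin (n + 1)} (h : (i : ℕ) + 1 = j) :
    j = i + 1 := by
  ext
  rw [Fin.val_add_one_of_lt (Fin.lt_last_iff_ne_last.mpr ?_), h]
  rintro rfl
  have := j.isLt
  rw [Fin.val_last] at h
  omega

theorem pow_two_pow_eq_one {M : Type*} [Monoid M] {x : M} (hx : x ^ 2 = 1) {k : ℕ} (hk : k ≠ 0) :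
    x ^ 2 ^ k = 1 := by
  obtain ⟨k, rfl⟩ := Nat.exists_eq_add_one_of_ne_zero hk
  rw [pow_succ', pow_mul, hx, one_pow]

theorem ite_pow_two_pow {M : Type*} [Monoid M] {g : M} (hg : g ^ 2 = 1) (P : Prop) [Decidable P]
    (k : ℕ) : (if P then g else 1) ^ 2 ^ k = if k = 0 ∧ P then g else 1 := by
  by_cases hk : k = 0 <;> split_ifs <;> simp_all [pow_two_pow_eq_one hg]

theorem mul_eq_one_iff_eq_of_sq_eq_one {G : Type*} [Group G] {x y : G} (hy : y ^ 2 = 1) :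
    x * y = 1 ↔ x = y := by
  rw [mul_eq_one_iff_eq_inv, inv_eq_of_mul_eq_one_right (by rwa [← pow_two])]

namespace EchinusNeg

structure SatisfiesRels {n : ℕ} {M : Type*} [Monoid M] (p q : Fin (n + 1) → ℕ)
    (B : Fin (n + 1) → M) : Prop where
  sq_eq_one : ∀ i, B i ^ 2 = 1
  pow_eq_pow : ∀ i, B i ^ 2 ^ p i = B (i + 1) ^ 2 ^ q i

namespace SatisfiesRels

variable {n : ℕ} {M : Type*} [Monoid M] {p q : Fin (n + 1) → ℕ} {B : Fin (n + 1) → M}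

theorem eq_one_of_forall_p_eq_zero (hB : SatisfiesRels p q B) (hp : ∀ i, p i = 0)
    {j : Fin (n + 1)} (hj : q j ≠ 0) (i : Fin (n + 1)) : B i = 1 := by
  have hstep : ∀ i, B i = B (i + 1) ^ 2 ^ q i := fun i => by
    simpa [hp i] using hB.pow_eq_pow i
  refine Fin.forall_of_add_one_imp (S := fun i => B i = 1) (j := j) ?_ (fun i hi => ?_) i
  · rw [hstep, pow_two_pow_eq_one (hB.sq_eq_one _) hj]
  · rw [hstep, hi, one_pow]

theorem eq_one_of_forall_q_eq_zero (hB : SatisfiesRels p q B) (hq : ∀ i, q i = 0)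
    {k : Fin (n + 1)} (hk : p k ≠ 0) (i : Fin (n + 1)) : B i = 1 := by
  have hstep : ∀ i, B (i + 1) = B i ^ 2 ^ p i := fun i => by
    simpa [hq i] using (hB.pow_eq_pow i).symm
  refine Fin.forall_of_imp_add_one (S := fun i => B i = 1) (j := k + 1) ?_ (fun i hi => ?_) i
  · rw [hstep, pow_two_pow_eq_one (hB.sq_eq_one _) hk]
  · rw [hstep, hi, one_pow]

theorem eq_one_of_not_iff (hB : SatisfiesRels p q B)
    (h : ¬((∑ i, p i = 0) ↔ (∑ i, q i = 0))) (i : Fin (n + 1)) : B i = 1 := by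
  simp only [Finset.sum_eq_zero_iff, Finset.mem_univ, true_imp_iff] at h
  by_cases hp : ∀ i, p i = 0
  · obtain ⟨j, hj⟩ := not_forall.mp fun hq => h (iff_of_true hp hq)
    exact hB.eq_one_of_forall_p_eq_zero hp hj i
  · obtain ⟨k, hk⟩ := not_forall.mp hp
    exact hB.eq_one_of_forall_q_eq_zero (by_contra fun hq => h (iff_of_false hp hq)) hk i

end SatisfiesRels

section Blocks

variable {n : ℕ} (p q : Fin (n + 1) → ℕ)

def ZeroStep (v w : Fin (n + 1)) : Prop := p v = 0 ∧ q v = 0 ∧ w = v + 1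

theorem exists_nonempty_block {k j : Fin (n + 1)} (hk : p k ≠ 0) (hj : q j ≠ 0) :
    ∃ s : Set (Fin (n + 1)), s.Nonempty ∧ ∀ e, p e = 0 ∧ e ∈ s ↔ q e = 0 ∧ e + 1 ∈ s := by
  let R := ReflTransGen (ZeroStep p q)
  let reached : Set (Fin (n + 1)) := {v | ∃ e, q e ≠ 0 ∧ R (e + 1) v}
  let reaches : Set (Fin (n + 1)) := {v | ∃ w, R v w ∧ p w ≠ 0}
  refine ⟨reached ∩ reaches, ?_, fun e => ⟨?_, ?_⟩⟩
  · by_contra hempty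
    rw [Set.not_nonempty_iff_eq_empty, Set.eq_empty_iff_forall_notMem] at hempty
    suffices ∀ v, v ∈ reached from hempty k ⟨this k, k, .refl, hk⟩
    refine Fin.forall_of_imp_add_one (j := j + 1) ⟨j, hj, .refl⟩ fun v hv => ?_
    by_cases hz : p v = 0 ∧ q v = 0
    · obtain ⟨e, he, hR⟩ := hv
      exact ⟨e, he, hR.tail ⟨hz.1, hz.2, rfl⟩⟩
    by_cases hqv : q v = 0
    · exact (hempty v ⟨hv, v, .refl, fun hpv => hz ⟨hpv, hqv⟩⟩).elim
    · exact ⟨v, hqv, .refl⟩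
  · rintro ⟨hpe, ⟨e', he', hR⟩, w, hw, hpw⟩
    rcases hw.cases_head with rfl | ⟨c, ⟨-, hqe, rfl⟩, hw⟩
    · exact absurd hpe hpw
    · exact ⟨hqe, ⟨e', he', hR.tail ⟨hpe, hqe, rfl⟩⟩, w, hw, hpw⟩
  · rintro ⟨hqe, ⟨e', he', hR⟩, w, hw, hpw⟩
    rcases hR.cases_tail with h | ⟨c, hR, hpc, hqc, hc⟩
    · rw [add_right_cancel h] at hqe
      exact absurd hqe he'
    · obtain rfl := add_right_cancel hc
      exact ⟨hpc, ⟨e', he', hR⟩, w, hw.head ⟨hpc, hqc, rfl⟩, hpw⟩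

theorem satisfiesRels_ite {M : Type*} [Monoid M] {g : M} (hg : g ^ 2 = 1)
    (s : Set (Fin (n + 1))) [DecidablePred (· ∈ s)]
    (hs : ∀ e, p e = 0 ∧ e ∈ s ↔ q e = 0 ∧ e + 1 ∈ s) :
    SatisfiesRels p q fun i => if i ∈ s then g else 1 where
  sq_eq_one i := by split_ifs <;> simp [hg]
  pow_eq_pow e := by rw [ite_pow_two_pow hg, ite_pow_two_pow hg]; exact if_congr (hs e) rfl rfl

theorem exists_satisfiesRels_ne_one (h : (∑ i, p i = 0) ↔ (∑ i, q i = 0)) :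
    ∃ B : Fin (n + 1) → Multiplicative (ZMod 2), SatisfiesRels p q B ∧ ∃ i, B i ≠ 1 := by
  obtain ⟨s, ⟨i, hi⟩, hs⟩ :
      ∃ s : Set (Fin (n + 1)), s.Nonempty ∧ ∀ e, p e = 0 ∧ e ∈ s ↔ q e = 0 ∧ e + 1 ∈ s := by
    simp only [Finset.sum_eq_zero_iff, Finset.mem_univ, true_imp_iff] at h
    by_cases hp : ∀ i, p i = 0
    · exact ⟨Set.univ, Set.univ_nonempty, fun e => by simp [hp e, h.mp hp e]⟩
    · obtain ⟨k, hk⟩ := not_forall.mp hp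
      obtain ⟨j, hj⟩ := not_forall.mp (mt h.mpr hp)
      exact exists_nonempty_block p q hk hj
  classical
  exact ⟨_, satisfiesRels_ite p q (g := .ofAdd 1) (by decide) s hs, i, by simp [hi]⟩

end Blocks

section Presentation

variable {n : ℕ} (hn : 0 < n + 1) (p q : Fin (n + 1) → ℕ)

theorem lift_rels_eq_one_iff {M : Type*} [CommGroup M] (v : Option (Fin (n + 1)) → M) :
    (∀ r ∈ echinusNegRels (n + 1) hn p q, FreeGroup.lift v r = 1) ↔
      SatisfiesRels p q (v ∘ some) := by
  have hlast : (⟨n + 1 - 1, Nat.sub_lt hn Nat.one_pos⟩ : Fin (n + 1)) = Fin.last n := by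
    ext; simp
  have hzero : (⟨0, hn⟩ : Fin (n + 1)) = 0 := rfl
  simp only [echinusNegRels, hlast, hzero, Set.mem_union, Set.mem_ofPred_eq,
    Set.mem_singleton_iff]
  have hwrap : FreeGroup.lift v ((FreeGroup.of none)⁻¹ *
      FreeGroup.of (some (Fin.last n)) ^ 2 ^ p (Fin.last n) * FreeGroup.of none *
      (FreeGroup.of (some 0) ^ (-(2 : ℤ) ^ q (Fin.last n)))⁻¹) =
        v (some (Fin.last n)) ^ 2 ^ p (Fin.last n) * v (some 0) ^ 2 ^ q (Fin.last n) := by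
    simp only [map_mul, map_inv, map_pow, map_zpow, FreeGroup.lift_apply_of, zpow_neg, inv_inv,
      mul_comm (v none)⁻¹, inv_mul_cancel_right]
    norm_cast
  have hsq_pow : ∀ k : ℕ, v (some 0) ^ 2 = 1 → (v (some 0) ^ k) ^ 2 = 1 := fun k h0 => by
    rw [← pow_mul, mul_comm, pow_mul, h0, one_pow]
  constructor
  · intro h
    have hsq : ∀ i, v (some i) ^ 2 = 1 := fun i => by simpa using h _ (.inl (.inl ⟨i, rfl⟩))
    refine ⟨hsq, fun i => ?_⟩
    rcases Fin.eq_castSucc_or_eq_last i with ⟨i, rfl⟩ | rfl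
    · have := h _ (.inl (.inr ⟨i.castSucc, i.succ, by simp, rfl⟩))
      simpa [Fin.coeSucc_eq_succ, mul_inv_eq_one] using this
    · have := h _ (.inr rfl)
      rw [hwrap, mul_eq_one_iff_eq_of_sq_eq_one (hsq_pow _ (hsq 0))] at this
      simpa using this
  · rintro ⟨hsq, hpow⟩ r ((⟨j, rfl⟩ | ⟨i, j, hij, rfl⟩) | rfl)
    · simpa using hsq j
    · simpa [mul_inv_eq_one, Fin.eq_add_one_of_val_add_one_eq hij] using hpow i
    · rw [hwrap, mul_eq_one_iff_eq_of_sq_eq_one (hsq_pow _ (hsq 0))]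
      simpa using hpow (Fin.last n)

variable {hn p q} {M : Type*} [CommGroup M] {B : Fin (n + 1) → M}

def toGroup (hB : SatisfiesRels p q B) (t : M) :
    PresentedGroup (echinusNegRels (n + 1) hn p q) →* M :=
  PresentedGroup.toGroup ((lift_rels_eq_one_iff hn p q (Option.elim' t B)).mpr hB)

@[simp]
theorem toGroup_of_none (hB : SatisfiesRels p q B) (t : M) :
    toGroup (hn := hn) hB t (PresentedGroup.of none) = t :=
  PresentedGroup.toGroup.of _

@[simp]
theorem toGroup_of_some (hB : SatisfiesRels p q B) (t : M) (i : Fin (n + 1)) :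
    toGroup (hn := hn) hB t (PresentedGroup.of (some i)) = B i :=
  PresentedGroup.toGroup.of _

variable (hn p q)

abbrev Ab : Type := Abelianization (PresentedGroup (echinusNegRels (n + 1) hn p q))

def gen (i : Fin (n + 1)) : Ab hn p q :=
  Abelianization.of (PresentedGroup.of (some i))

theorem satisfiesRels_gen : SatisfiesRels p q (gen hn p q) := by
  refine (lift_rels_eq_one_iff hn p q
    (fun x => Abelianization.of (PresentedGroup.of x))).mp fun r hr => ?_
  have : FreeGroup.lift (fun x => Abelianization.of (PresentedGroup.of x)) =
      Abelianization.of.comp (PresentedGroup.mk (echinusNegRels (n + 1) hn p q)) :=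
    FreeGroup.ext_hom _ _ fun _ => FreeGroup.lift_apply_of
  rw [this, MonoidHom.comp_apply, PresentedGroup.one_of_mem hr, map_one]

theorem exists_hom_gen (hB : SatisfiesRels p q B) :
    ∃ φ : Ab hn p q →* M, ∀ i, φ (gen hn p q i) = B i :=
  ⟨Abelianization.lift (toGroup hB 1), fun i => by simp [gen]⟩

theorem nonempty_ab_mulEquiv_int_iff :
    Nonempty (Ab hn p q ≃* Multiplicative ℤ) ↔ ∀ i, gen hn p q i = 1 := by
  constructor
  · rintro ⟨e⟩ i
    apply e.injective
    rw [map_one, ← sq_eq_one, ← map_pow, (satisfiesRels_gen hn p q).sq_eq_one, map_one]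
  · intro h
    have hB : SatisfiesRels p q (fun _ => (1 : Multiplicative ℤ)) := ⟨by simp, by simp⟩
    let T : Ab hn p q := Abelianization.of (PresentedGroup.of none)
    refine ⟨MonoidHom.toMulEquiv (Abelianization.lift (toGroup (hn := hn) hB (.ofAdd 1)))
      (zpowersHom _ T) ?_ ?_⟩
    · refine Abelianization.hom_ext _ _ (PresentedGroup.ext fun x => ?_)
      cases x with
      | none => simp [T]
      | some i => simpa [gen] using (h i).symm
    · ext
      simp [T]

end Presentation

end EchinusNeg

open EchinusNeg in
theorem stmt16 (n : ℕ) (hn : 0 < n) (p q : Fin n → ℕ) :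
    Nonempty (Abelianization (PresentedGroup (echinusNegRels n hn p q)) ≃* Multiplicative ℤ) ↔
      ((∑ i, p i = 0 ∧ ∑ i, q i ≠ 0) ∨ (∑ i, p i ≠ 0 ∧ ∑ i, q i = 0)) := by
  obtain ⟨n, rfl⟩ := Nat.exists_eq_add_one_of_ne_zero hn.ne'
  rw [nonempty_ab_mulEquiv_int_iff]
  refine ⟨fun hgen => ?_, fun h => (satisfiesRels_gen hn p q).eq_one_of_not_iff (by tauto)⟩
  by_contra h
  obtain ⟨B, hB, i, hi⟩ := exists_satisfiesRels_ne_one p q (by tauto)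
  obtain ⟨φ, hφ⟩ := exists_hom_gen hn p q hB
  exact hi (by rw [← hφ, hgen, map_one])
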